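/- arXiv:1301.6209 — 7 statements merged into one kernel-verified Lean document; each statement's English description precedes it below -/
import Mathlib

section
/- Define R11IF = log2(1+aP), R22IF = log2(1+dP), R12IAN = log2(1+bP/(1+aP)), R21IAN = log2(1+cP/(1+dP)), with a,b,c,d,P > 0. If R12IAN > R22IF and R21IAN > R11IF, then R11IF + R22IF ≤ min{log2(1+(a+b)P), log2(1+(c+d)P)}. -/
/-!
Multiplying the hypothesis `1 + d P < 1 + b P / (1 + a P)` through by `1 + a P` gives
`(1 + a P)(1 + d P) < 1 + (a + b) P`, i.e. the interference-free sum rate lies below the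
sum-rate constraint of the multiple-access channel at receiver 1; symmetrically at receiver 2.
-/

open Real

lemma mul_lt_add_of_lt_one_add_div {u v w : ℝ} (hu : 0 < u) (h : v < 1 + w / u) :
    u * v < u + w := by
  have := mul_lt_mul_of_pos_left h hu
  rwa [mul_add, mul_one, mul_div_cancel₀ w hu.ne'] at this

lemma logb_add_logb_lt_of_lt_logb_one_add_div {β u v w : ℝ} (hβ : 1 < β) (hu : 0 < u)
    (hv : 0 < v) (hw : 0 ≤ w) (h : logb β v < logb β (1 + w / u)) :
    logb β u + logb β v < logb β (u + w) := by
  have hvw : v < 1 + w / u := (logb_lt_logb_iff hβ hv (by positivity)).mp h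
  rw [← logb_mul hu.ne' hv.ne']
  exact logb_lt_logb hβ (mul_pos hu hv) (mul_lt_add_of_lt_one_add_div hu hvw)

theorem stmt4 (a b c d P : ℝ) (ha : 0 < a) (hb : 0 < b) (hc : 0 < c) (hd : 0 < d)
    (hP : 0 < P)
    (h1 : logb 2 (1 + b * P / (1 + a * P)) > logb 2 (1 + d * P))
    (h2 : logb 2 (1 + c * P / (1 + d * P)) > logb 2 (1 + a * P)) :
    logb 2 (1 + a * P) + logb 2 (1 + d * P) ≤
      min (logb 2 (1 + (a + b) * P)) (logb 2 (1 + (c + d) * P)) := by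
  have hA : 0 < 1 + a * P := by positivity
  have hD : 0 < 1 + d * P := by positivity
  have receiver1 := logb_add_logb_lt_of_lt_logb_one_add_div one_lt_two hA hD (by positivity) h1
  have receiver2 := logb_add_logb_lt_of_lt_logb_one_add_div one_lt_two hD hA (by positivity) h2
  rw [show 1 + (a + b) * P = 1 + a * P + b * P by ring,
    show 1 + (c + d) * P = 1 + d * P + c * P by ring]
  exact le_min receiver1.le ((add_comm _ _).trans_lt receiver2).le
end

section
/- Let a,b,c,d,P > 0 and define R12IF = log2(1+bP), R22IAN = log2(1+dP/(1+cP)), R21IF = log2(1+cP), R11IAN = log2(1+aP/(1+bP)), R12IAN = log2(1+bP/(1+aP)), R22IF = log2(1+dP), R21IAN = log2(1+cP/(1+dP)), R11IF = log2(1+aP). Then the conditions (R12IF < R22IAN and R21IF < R11IAN) and (R12IAN > R22IF and R21IAN > R11IF) cannot hold simultaneously. -/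
open Real

theorem stmt5 (a b c d P : ℝ) (ha : 0 < a) (hb : 0 < b) (hc : 0 < c) (hd : 0 < d)
    (hP : 0 < P) :
    ¬ ((logb 2 (1 + b * P) < logb 2 (1 + d * P / (1 + c * P)) ∧
        logb 2 (1 + c * P) < logb 2 (1 + a * P / (1 + b * P))) ∧
       (logb 2 (1 + b * P / (1 + a * P)) > logb 2 (1 + d * P) ∧
        logb 2 (1 + c * P / (1 + d * P)) > logb 2 (1 + a * P))) := by
  rintro ⟨⟨h1, -⟩, ⟨h3, -⟩⟩
  have hbP : 0 < b * P := mul_pos hb hP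
  have hdP : 0 < d * P := mul_pos hd hP
  have hcP : 0 < 1 + c * P := by positivity
  have haP : 0 < 1 + a * P := by positivity
  have e1 : 1 + b * P < 1 + d * P / (1 + c * P) :=
    (Real.logb_lt_logb_iff (by norm_num) (by positivity) (by positivity)).mp h1
  have e3 : 1 + d * P < 1 + b * P / (1 + a * P) :=
    (Real.logb_lt_logb_iff (by norm_num) (by positivity) (by positivity)).mp h3
  have l1 : b * P < d * P := by
    have : d * P / (1 + c * P) ≤ d * P := by
      rw [div_le_iff₀ hcP]; nlinarith [mul_pos hdP (mul_pos hc hP)]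
    linarith
  have l3 : d * P < b * P := by
    have : b * P / (1 + a * P) ≤ b * P := by
      rw [div_le_iff₀ haP]; nlinarith [mul_pos hbP (mul_pos ha hP)]
    linarith
  linarith
end

section
/- For a,b,c,d,P > 0: if log2(1+bP) < log2(1+dP/(1+cP)) and log2(1+cP) < log2(1+aP/(1+bP)) (i.e., R12IF < R22IAN and R21IF < R11IAN), then log2(1+aP/(1+bP)) + log2(1+dP/(1+cP)) > max{log2(1+(a+b)P), log2(1+(c+d)P)}. -/
/-! Successive decoding splits each MAC sum rate into a cross rate plus an interference-as-noise
rate: `log(1 + (a+b)P) = log(1 + bP) + log(1 + aP/(1 + bP))`. Replacing the cross rate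
`log(1 + bP)` by the larger `log(1 + dP/(1 + cP))` bounds the first MAC sum rate by the sum of the
two interference-as-noise rates, and symmetrically for the second. -/

open Real

theorem logb_one_add_add_mul (B a b P : ℝ) (hb : 1 + b * P ≠ 0) (hab : 1 + (a + b) * P ≠ 0) :
    logb B (1 + (a + b) * P) = logb B (1 + b * P) + logb B (1 + a * P / (1 + b * P)) := by
  have hsplit : 1 + a * P / (1 + b * P) = (1 + (a + b) * P) / (1 + b * P) := by
    rw [eq_div_iff hb, add_mul, div_mul_cancel₀ _ hb]
    ring
  rw [hsplit, ← logb_mul hb (div_ne_zero hab hb), mul_div_cancel₀ _ hb]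

theorem stmt6 (a b c d P : ℝ) (ha : 0 < a) (hb : 0 < b) (hc : 0 < c) (hd : 0 < d)
    (hP : 0 < P)
    (h1 : logb 2 (1 + b * P) < logb 2 (1 + d * P / (1 + c * P)))
    (h2 : logb 2 (1 + c * P) < logb 2 (1 + a * P / (1 + b * P))) :
    logb 2 (1 + a * P / (1 + b * P)) + logb 2 (1 + d * P / (1 + c * P)) >
      max (logb 2 (1 + (a + b) * P)) (logb 2 (1 + (c + d) * P)) := by
  have hMAC₁ := logb_one_add_add_mul 2 a b P (by positivity) (by positivity)
  have hMAC₂ := logb_one_add_add_mul 2 d c P (by positivity) (by positivity)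
  rw [add_comm d c] at hMAC₂
  rw [gt_iff_lt, max_lt_iff]
  constructor <;> linarith
end

section
/- For a,b,c,d,P > 0: if log2(1+(a+b)P) = log2(1+(c+d)P) (equal MAC qualities) and neither condition (a) (R12IAN > R22IF and R21IAN > R11IF) nor condition (b) (R12IF < R22IAN and R21IF < R11IAN) holds, then the maximum sum rate of assignment (1,2) from equation (eq:12g) equals log2(1+(a+b)P), the joint-transmission sum rate. -/
/-! Both MAC sum rates split by the chain rule: `R11IF + R21IAN = R21IF + R11IAN = log₂(1 + (a+b)P)`
and likewise at receiver 2. Each of the last three decoding configurations is therefore bounded by one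
of these splittings (using ¬(b) for the one decoding both interference-as-noise rates), while ¬(a)
forces `R11IF + R22IF ≥ log₂(1 + (a+b)P)`, so the joint-transmission term attains the maximum. -/

open Real

lemma logb_one_add_mul_add_logb_one_add_div (β x y P : ℝ) (hx : 0 ≤ x) (hy : 0 ≤ y) (hP : 0 ≤ P) :
    logb β (1 + x * P) + logb β (1 + y * P / (1 + x * P)) = logb β (1 + (x + y) * P) := by
  have hxP : 0 < 1 + x * P := by positivity
  have hyP : 0 < 1 + y * P / (1 + x * P) := by positivity
  rw [← logb_mul hxP.ne' hyP.ne']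
  congr 1
  field_simp
  ring

lemma max_sum_rate_eq_of_chain_rule {S T A B C D A' B' C' D' : ℝ} (hST : S = T)
    (hAB' : A + B' = S) (hBA' : B + A' = S) (hDC' : D + C' = T) (hCD' : C + D' = T)
    (hnota : ¬ (B' > D ∧ C' > A)) (hnotb : ¬ (B < D' ∧ C < A')) :
    max (max (min (min S T) (A + D)) (A + min B' D')) (max (D + min C' A') (A' + D')) = S := by
  have hjoint : S ≤ A + D := by
    by_contra! h
    exact hnota ⟨by linarith, by linarith⟩
  have hian : A' + D' ≤ S := by
    by_contra! h
    exact hnotb ⟨by linarith, by linarith⟩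
  apply le_antisymm
  · refine max_le (max_le ?_ ?_) (max_le ?_ hian)
    · exact min_le_of_left_le (min_le_left _ _)
    · linarith [min_le_left B' D']
    · linarith [min_le_left C' A']
  · exact le_max_of_le_left (le_max_of_le_left (le_min (le_min le_rfl hST.le) hjoint))

theorem stmt11 (a b c d P : ℝ) (ha : 0 < a) (hb : 0 < b) (hc : 0 < c) (hd : 0 < d)
    (hP : 0 < P)
    (heq : logb 2 (1 + (a + b) * P) = logb 2 (1 + (c + d) * P))
    (hnota : ¬ (logb 2 (1 + b * P / (1 + a * P)) > logb 2 (1 + d * P) ∧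
                logb 2 (1 + c * P / (1 + d * P)) > logb 2 (1 + a * P)))
    (hnotb : ¬ (logb 2 (1 + b * P) < logb 2 (1 + d * P / (1 + c * P)) ∧
                logb 2 (1 + c * P) < logb 2 (1 + a * P / (1 + b * P)))) :
    max (max (min (min (logb 2 (1 + (a + b) * P)) (logb 2 (1 + (c + d) * P)))
                  (logb 2 (1 + a * P) + logb 2 (1 + d * P)))
             (logb 2 (1 + a * P) +
                min (logb 2 (1 + b * P / (1 + a * P))) (logb 2 (1 + d * P / (1 + c * P)))))
        (max (logb 2 (1 + d * P) +
                min (logb 2 (1 + c * P / (1 + d * P))) (logb 2 (1 + a * P / (1 + b * P))))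
             (logb 2 (1 + a * P / (1 + b * P)) + logb 2 (1 + d * P / (1 + c * P)))) =
      logb 2 (1 + (a + b) * P) := by
  have chain := fun x y hx hy ↦ logb_one_add_mul_add_logb_one_add_div 2 x y P hx hy hP.le
  refine max_sum_rate_eq_of_chain_rule heq (chain a b ha.le hb.le) ?_ ?_ (chain c d hc.le hd.le)
    hnota hnotb
  · rw [chain b a hb.le ha.le, add_comm b a]
  · rw [chain d c hd.le hc.le, add_comm d c]
end

section
/- For a,b,c,d,P > 0 with a+b > c+d (so receiver 1's MAC is better): if a > c (i.e., R11IF > R21IF) then the configuration (receiver 1 decodes interference, receiver 2 does not) achieves sum rate at least as large as the both-decode configuration, i.e., log2(1+aP) + min{log2(1+bP/(1+aP)), log2(1+dP/(1+cP))} ≥ min{log2(1+(a+b)P), log2(1+(c+d)P), log2(1+aP)+log2(1+dP)}. -/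
/-!
Writing the single-user rates as differences of sum rates,
`log(1 + bP/(1 + aP)) = log(1 + (a+b)P) - log(1 + aP)`, the left side becomes
`min (log(1 + (a+b)P), log(1 + (c+d)P) + log(1 + aP) - log(1 + cP))`,
and `a > c` makes the correction term nonnegative, so it dominates the two MAC sum rates.
-/

open Real

lemma one_add_mul_div_one_add_mul (a b P : ℝ) (h : 1 + a * P ≠ 0) :
    1 + b * P / (1 + a * P) = (1 + (a + b) * P) / (1 + a * P) := by
  rw [one_add_div h]
  ring

lemma min_logb_le_logb_add_min_logb_div {B u w X Y : ℝ} (hB : 1 < B) (hw : 0 < w) (hwu : w ≤ u)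
    (hX : 0 < X) (hY : 0 < Y) :
    min (logb B X) (logb B Y) ≤ logb B u + min (logb B (X / u)) (logb B (Y / w)) := by
  have hu : 0 < u := hw.trans_le hwu
  have hlog : logb B w ≤ logb B u := logb_le_logb_of_le hB hw hwu
  rw [logb_div hX.ne' hu.ne', logb_div hY.ne' hw.ne', add_min]
  exact min_le_min (by linarith) (by linarith)

theorem stmt12_general (a b c d P : ℝ) (ha : 0 < a) (hb : 0 < b) (hc : 0 < c) (hd : 0 < d)
    (hP : 0 < P) (hac : a > c) :
    logb 2 (1 + a * P) +
        min (logb 2 (1 + b * P / (1 + a * P))) (logb 2 (1 + d * P / (1 + c * P))) ≥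
      min (min (logb 2 (1 + (a + b) * P)) (logb 2 (1 + (c + d) * P)))
          (logb 2 (1 + a * P) + logb 2 (1 + d * P)) := by
  have hca : 1 + c * P ≤ 1 + a * P := by gcongr
  rw [one_add_mul_div_one_add_mul a b P (by positivity),
    one_add_mul_div_one_add_mul c d P (by positivity)]
  exact (min_le_left _ _).trans
    (min_logb_le_logb_add_min_logb_div one_lt_two (by positivity) hca (by positivity)
      (by positivity))

theorem stmt12 (a b c d P : ℝ) (ha : 0 < a) (hb : 0 < b) (hc : 0 < c) (hd : 0 < d)
    (hP : 0 < P) (hmac : a + b > c + d) (hac : a > c) :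
    logb 2 (1 + a * P) +
        min (logb 2 (1 + b * P / (1 + a * P))) (logb 2 (1 + d * P / (1 + c * P))) ≥
      min (min (logb 2 (1 + (a + b) * P)) (logb 2 (1 + (c + d) * P)))
          (logb 2 (1 + a * P) + logb 2 (1 + d * P)) :=
  stmt12_general a b c d P ha hb hc hd hP hac
end

section
/- For a,b,c,d,P > 0: if log2(1+aP) < log2(1+cP/(1+dP)) and log2(1+dP) < log2(1+bP/(1+aP)) (i.e., R11IF < R21IAN and R22IF < R12IAN), then log2(1+bP/(1+aP)) + log2(1+cP/(1+dP)) > max{log2(1+(a+b)P), log2(1+(c+d)P)}. -/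
/-!
Successive decoding: `1 + (a + b) P = (1 + a P) (1 + b P / (1 + a P))`, so the joint-transmission
sum rate at receiver 1 is `log (1 + a P)` plus the interference-as-noise rate of the crossed
message. The hypothesis `h1` replaces the first summand by the larger crossed rate at receiver 2;
receiver 2 is symmetric, using `h2`.
-/

open Real

theorem logb_one_add_add_eq (β : ℝ) {u v : ℝ} (hu : 0 ≤ u) (hv : 0 ≤ v) :
    logb β (1 + (u + v)) = logb β (1 + u) + logb β (1 + v / (1 + u)) := by
  have hu' : 0 < 1 + u := by positivity
  rw [← logb_mul hu'.ne' (by positivity), mul_add, mul_one, mul_div_cancel₀ _ hu'.ne', add_assoc]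

theorem stmt14 (a b c d P : ℝ) (ha : 0 < a) (hb : 0 < b) (hc : 0 < c) (hd : 0 < d)
    (hP : 0 < P)
    (h1 : logb 2 (1 + a * P) < logb 2 (1 + c * P / (1 + d * P)))
    (h2 : logb 2 (1 + d * P) < logb 2 (1 + b * P / (1 + a * P))) :
    logb 2 (1 + b * P / (1 + a * P)) + logb 2 (1 + c * P / (1 + d * P)) >
      max (logb 2 (1 + (a + b) * P)) (logb 2 (1 + (c + d) * P)) := by
  rw [gt_iff_lt, max_lt_iff, add_mul, add_mul, add_comm (c * P)]
  constructor
  · rw [logb_one_add_add_eq 2 (by positivity) (by positivity)]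
    linarith
  · rw [logb_one_add_add_eq 2 (by positivity) (by positivity)]
    linarith
end

section
/- For a,b,c,d,P > 0, the conditions (log2(1+bP) < log2(1+dP/(1+cP)) and log2(1+cP) < log2(1+aP/(1+bP))) and (log2(1+aP) < log2(1+cP/(1+dP)) and log2(1+dP) < log2(1+bP/(1+aP))) cannot both hold. -/
open Real

/- The two conditions are incompatible already through their mismatched halves: since interference
only lowers a rate, `1 + b P < 1 + d P / (1 + c P)` forces `b < d`, while
`1 + d P < 1 + b P / (1 + a P)` forces `d < b`. -/

lemma lt_of_logb_one_add_lt_logb_one_add_div {B x y z : ℝ} (hB : 1 < B) (hx : 0 < 1 + x)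
    (hy : 0 ≤ y) (hz : 0 ≤ z) (h : logb B (1 + x) < logb B (1 + y / (1 + z))) : x < y := by
  have hdiv : y / (1 + z) ≤ y := div_le_self hy (le_add_of_nonneg_right hz)
  have hlt : 1 + x < 1 + y / (1 + z) := (logb_lt_logb_iff hB hx (by positivity)).mp h
  linarith

theorem stmt15 (a b c d P : ℝ) (ha : 0 < a) (hb : 0 < b) (hc : 0 < c) (hd : 0 < d)
    (hP : 0 < P) :
    ¬ ((logb 2 (1 + b * P) < logb 2 (1 + d * P / (1 + c * P)) ∧
        logb 2 (1 + c * P) < logb 2 (1 + a * P / (1 + b * P))) ∧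
       (logb 2 (1 + a * P) < logb 2 (1 + c * P / (1 + d * P)) ∧
        logb 2 (1 + d * P) < logb 2 (1 + b * P / (1 + a * P)))) := by
  rintro ⟨⟨hbd, -⟩, -, hdb⟩
  have hbd' : b * P < d * P :=
    lt_of_logb_one_add_lt_logb_one_add_div one_lt_two (by positivity) (by positivity)
      (by positivity) hbd
  have hdb' : d * P < b * P :=
    lt_of_logb_one_add_lt_logb_one_add_div one_lt_two (by positivity) (by positivity)
      (by positivity) hdb
  exact lt_asymm hbd' hdb'
end
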